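/- Let Γ = (C, A, Δ) be a normed BPA system and R ⊆ C_G. Then Id_R is admissible (i.e., Id_{Id_R} = Id_R), R ⊆ Id_R, and Id_R is the smallest admissible set containing R: for every admissible S ⊆ C_G with R ⊆ S one has Id_R ⊆ S. -/

import Mathlib

open Relation

/-- A BPA system over constants `C` and actions `A`: a distinguished silent
action `tau`, and a finite set of transition rules `X —ℓ→ α`, where `C` and
`A` are finite. -/
structure BPA (C A : Type) where
  tau : A
  rules : Set (C × A × List C)
  finC : Finite C
  finA : Finite A
  finRules : rules.Finite

namespace BPA

variable {C A : Type}

/-- One-step labelled transition between processes.  Processes are strings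
over `C` (lists, with the leftmost constant acting first). -/
def Step (Γ : BPA C A) (ℓ : A) (p q : List C) : Prop :=
  ∃ X γ β, (X, ℓ, γ) ∈ Γ.rules ∧ p = X :: β ∧ q = γ ++ β

/-- A transition carrying an arbitrary label. -/
def AnyStep (Γ : BPA C A) (p q : List C) : Prop := ∃ ℓ, Γ.Step ℓ p q

/-- `⟹` : the reflexive transitive closure of silent steps. -/
def TauStar (Γ : BPA C A) : List C → List C → Prop := ReflTransGen (Γ.Step Γ.tau)

/-- A process is normed if it can reach the empty process `ε`. -/
def NormedProc (Γ : BPA C A) (p : List C) : Prop := ReflTransGen Γ.AnyStep p []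

/-- The BPA system is normed. -/
def Normed (Γ : BPA C A) : Prop := ∀ X : C, Γ.NormedProc [X]

/-- A chain of `s`-steps starting at `start` in which every visited state is
related by `r` to the process `anchor`. -/
def RelChain (s : List C → List C → Prop) (r : List C → List C → Prop)
    (anchor : List C) : List C → List C → Prop :=
  ReflTransGen fun x y => s x y ∧ r anchor y

/-- Branching bisimulation (an equivalence relation by convention). -/
def IsBranchingBisim (Γ : BPA C A) (r : List C → List C → Prop) : Prop :=
  Equivalence r ∧ ∀ α β, r α β →
    ((∀ a, a ≠ Γ.tau → ∀ α', Γ.Step a α α' →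
        ∃ β'' β', RelChain (Γ.Step Γ.tau) r β β β'' ∧ Γ.Step a β'' β' ∧ r α' β') ∧
     (∀ α', Γ.Step Γ.tau α α' → ¬ r α α' →
        ∃ β'' β', RelChain (Γ.Step Γ.tau) r β β β'' ∧ Γ.Step Γ.tau β'' β' ∧
          ¬ r β'' β' ∧ r α' β'))

/-- Branching bisimilarity `≃` : the largest branching bisimulation. -/
def Bisim (Γ : BPA C A) (α β : List C) : Prop :=
  ∃ r, Γ.IsBranchingBisim r ∧ r α β

/-- A ground process: it can silently reach `ε`. -/
def Ground (Γ : BPA C A) (p : List C) : Prop := Γ.TauStar p []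

/-- The set `C_G` of ground constants. -/
def GroundC (Γ : BPA C A) : Set C := {X | Γ.Ground [X]}

/-- `R`-equality `=_R`: the two processes differ only in suffixes over `R`. -/
def REq (R : Set C) (α β : List C) : Prop :=
  ∃ ζ a b, α = ζ ++ a ∧ β = ζ ++ b ∧ (∀ X ∈ a, X ∈ R) ∧ (∀ X ∈ b, X ∈ R)

open Classical in
/-- The `R`-normal form `α_R` of a process: delete the maximal suffix over `R`. -/
noncomputable def nf (R : Set C) (α : List C) : List C :=
  (α.reverse.dropWhile fun X => decide (X ∈ R)).reverse

/-- A process is in `R`-normal form. -/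
def InNF (R : Set C) (α : List C) : Prop := nf R α = α

/-- The `R`-transition relation `—ℓ→_R` between `R`-normal forms. -/
def StepR (Γ : BPA C A) (R : Set C) (ℓ : A) (ζ η : List C) : Prop :=
  ∃ α β, ζ = nf R α ∧ η = nf R β ∧ Γ.Step ℓ α β

/-- `⟹_R`. -/
def TauStarR (Γ : BPA C A) (R : Set C) : List C → List C → Prop :=
  ReflTransGen (Γ.StepR R Γ.tau)

/-- `R`-bisimulation: an equivalence relation containing `=_R` satisfying
ground preservation and the relativized branching transfer conditions. -/
def IsRBisim (Γ : BPA C A) (R : Set C) (r : List C → List C → Prop) : Prop :=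
  Equivalence r ∧ (∀ α β, REq R α β → r α β) ∧
  ∀ α β, r α β →
    ((Γ.TauStar α [] → Γ.TauStar β []) ∧
     (∀ α', Γ.Step Γ.tau α α' → ¬ r α α' →
        ∃ β'' β', RelChain (Γ.StepR R Γ.tau) r β (nf R β) β'' ∧
          Γ.StepR R Γ.tau β'' β' ∧ ¬ r β'' β' ∧ r α' β') ∧
     (∀ a, a ≠ Γ.tau → ∀ α', Γ.Step a α α' →
        ∃ β'' β', RelChain (Γ.StepR R Γ.tau) r β (nf R β) β'' ∧
          Γ.StepR R a β'' β' ∧ r α' β'))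

/-- `R`-bisimilarity `≃_R` : the largest `R`-bisimulation. -/
def RBisim (Γ : BPA C A) (R : Set C) (α β : List C) : Prop :=
  ∃ r, Γ.IsRBisim R r ∧ r α β

/-- `Id_R = {X ∈ C : X ≃_R ε}`. -/
def IdR (Γ : BPA C A) (R : Set C) : Set C := {X | Γ.RBisim R [X] []}

/-- `Rd_R(γ) = {X ∈ C : Xγ ≃_R γ}`. -/
def RdR (Γ : BPA C A) (R : Set C) (γ : List C) : Set C :=
  {X | Γ.RBisim R (X :: γ) γ}

/-- An admissible reference set: `R = Id_R`. -/
def Admissible (Γ : BPA C A) (R : Set C) : Prop := R = Γ.IdR R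

end BPA

/-!
`≃_R` coincides with semi-branching bisimilarity on the LTS of `R`-normal forms, in which
termination means silently reaching `ε`. Semi-branching bisimulations compose, so this
bisimilarity is an equivalence and itself a bisimulation; the stuttering property turns its
silent answers into the chains required of an `R`-bisimulation.

Two transfer results then give the theorem. If `R ⊆ S ⊆ C_G`, then `≃_R ⊆ ≃_S`: a normal-form
step from a nonempty normal form is a step of its head constant, which every representative can
take, and a step from `ε` is answered by `ε` itself. If `R ⊆ S ⊆ Id_R`, then `≃_S ⊆ ≃_R`,
because a suffix over `Id_R` is absorbed (`uX ≃_R u` for `X ∈ Id_R`), so every `S`-step can be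
replayed in the `R`-system. Taking `S = Id_R` gives admissibility of `Id_R`, and for admissible
`S ⊇ R` we get `Id_R ⊆ Id_S = S`.
-/

section SemiBranching

variable {Q L : Type*} (step : L → Q → Q → Prop) (τ : L) (e : Q)

def CanMatch (r : Q → Q → Prop) (y x : Q) (ℓ : L) (x' : Q) : Prop :=
  ∃ y₁, ReflTransGen (step τ) y y₁ ∧ r x y₁ ∧
    (ℓ = τ ∧ r x' y₁ ∨ ∃ y₂, step ℓ y₁ y₂ ∧ r x' y₂)

def Progresses (r s : Q → Q → Prop) : Prop :=
  ∀ x y, r x y → (ReflTransGen (step τ) x e → ReflTransGen (step τ) y e) ∧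
    ∀ ℓ x', step ℓ x x' → CanMatch step τ s y x ℓ x'

def IsSemiBranching (r : Q → Q → Prop) : Prop := Progresses step τ e r r

def SemiBisim (x y : Q) : Prop :=
  ∃ r, (∀ a b, r a b → r b a) ∧ IsSemiBranching step τ e r ∧ r x y

variable {step τ e} {r s t : Q → Q → Prop} {x x' y y₀ : Q} {ℓ : L}

theorem CanMatch.imp {x₀ x₀' : Q} (hx : ∀ b, r x b → s x₀ b) (hx' : ∀ b, r x' b → s x₀' b)
    (h : CanMatch step τ r y x ℓ x') : CanMatch step τ s y x₀ ℓ x₀' := by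
  obtain ⟨y₁, hy, h₁, ⟨hℓ, h₁'⟩ | ⟨y₂, hs, h₂⟩⟩ := h
  exacts [⟨y₁, hy, hx _ h₁, Or.inl ⟨hℓ, hx' _ h₁'⟩⟩, ⟨y₁, hy, hx _ h₁, Or.inr ⟨y₂, hs, hx' _ h₂⟩⟩]

theorem CanMatch.mono (hrs : r ≤ s) (h : CanMatch step τ r y x ℓ x') :
    CanMatch step τ s y x ℓ x' :=
  h.imp (hrs x) (hrs x')

theorem CanMatch.head (hy : ReflTransGen (step τ) y y₀) (h : CanMatch step τ r y₀ x ℓ x') :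
    CanMatch step τ r y x ℓ x' :=
  let ⟨y₁, hy₁, h⟩ := h
  ⟨y₁, hy.trans hy₁, h⟩

theorem CanMatch.exists_tau (h : CanMatch step τ r y x τ x') :
    ∃ y', ReflTransGen (step τ) y y' ∧ r x' y' := by
  obtain ⟨y₁, hy, -, ⟨-, h₁⟩ | ⟨y₂, hs, h₂⟩⟩ := h
  exacts [⟨y₁, hy, h₁⟩, ⟨y₂, hy.tail hs, h₂⟩]

theorem Progresses.mono (h : Progresses step τ e r s) (hst : s ≤ t) : Progresses step τ e r t :=
  fun x y hxy => ⟨(h x y hxy).1, fun ℓ x' hx => ((h x y hxy).2 ℓ x' hx).mono hst⟩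

theorem Progresses.sup (hr : Progresses step τ e r t) (hs : Progresses step τ e s t) :
    Progresses step τ e (r ⊔ s) t := by
  rintro x y (hxy | hxy)
  exacts [hr x y hxy, hs x y hxy]

theorem IsSemiBranching.exists_tauStar (hr : IsSemiBranching step τ e r) (hxy : r x y)
    (hx : ReflTransGen (step τ) x x') : ∃ y', ReflTransGen (step τ) y y' ∧ r x' y' := by
  induction hx using ReflTransGen.head_induction_on generalizing y with
  | refl => exact ⟨y, .refl, hxy⟩
  | head hs _ ih =>
    obtain ⟨y₁, hy₁, h₁⟩ := ((hr _ _ hxy).2 τ _ hs).exists_tau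
    obtain ⟨y', hy', h'⟩ := ih h₁
    exact ⟨y', hy₁.trans hy', h'⟩

theorem isSemiBranching_eq : IsSemiBranching step τ e (· = ·) := by
  rintro x _ rfl
  exact ⟨id, fun ℓ x' hx => ⟨x, .refl, rfl, Or.inr ⟨x', hx, rfl⟩⟩⟩

theorem IsSemiBranching.comp (hr : IsSemiBranching step τ e r) (hs : IsSemiBranching step τ e s) :
    IsSemiBranching step τ e (Relation.Comp r s) := by
  rintro x z ⟨y, hxy, hyz⟩
  refine ⟨(hs y z hyz).1 ∘ (hr x y hxy).1, fun ℓ x' hx => ?_⟩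
  obtain ⟨y₁, hy₁, hxy₁, hmove⟩ := (hr x y hxy).2 ℓ x' hx
  obtain ⟨z₁, hz₁, hy₁z₁⟩ := hs.exists_tauStar hyz hy₁
  rcases hmove with ⟨rfl, hx'y₁⟩ | ⟨y₂, hy₂, hx'y₂⟩
  · exact ⟨z₁, hz₁, ⟨y₁, hxy₁, hy₁z₁⟩, Or.inl ⟨rfl, y₁, hx'y₁, hy₁z₁⟩⟩
  · exact (((hs y₁ z₁ hy₁z₁).2 ℓ y₂ hy₂).imp (fun b hb => ⟨y₁, hxy₁, hb⟩)
      (fun b hb => ⟨y₂, hx'y₂, hb⟩)).head hz₁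

theorem SemiBisim.of_isSemiBranching (hsymm : ∀ a b, r a b → r b a)
    (hr : IsSemiBranching step τ e r) (hxy : r x y) : SemiBisim step τ e x y :=
  ⟨r, hsymm, hr, hxy⟩

theorem SemiBisim.refl (x : Q) : SemiBisim step τ e x x :=
  .of_isSemiBranching (fun _ _ => Eq.symm) isSemiBranching_eq rfl

theorem SemiBisim.symm (h : SemiBisim step τ e x y) : SemiBisim step τ e y x :=
  let ⟨r, hsymm, hr, hxy⟩ := h
  ⟨r, hsymm, hr, hsymm _ _ hxy⟩

theorem SemiBisim.trans {z : Q} (h : SemiBisim step τ e x y) (h' : SemiBisim step τ e y z) :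
    SemiBisim step τ e x z := by
  obtain ⟨r, hr, hrs, hxy⟩ := h
  obtain ⟨s, hs, hss, hyz⟩ := h'
  refine .of_isSemiBranching (r := Relation.Comp r s ⊔ Relation.Comp s r) ?_
    (((hrs.comp hss).mono le_sup_left).sup ((hss.comp hrs).mono le_sup_right))
    (Or.inl ⟨y, hxy, hyz⟩)
  rintro a b (⟨c, hac, hcb⟩ | ⟨c, hac, hcb⟩)
  exacts [Or.inr ⟨c, hs _ _ hcb, hr _ _ hac⟩, Or.inl ⟨c, hr _ _ hcb, hs _ _ hac⟩]

theorem isSemiBranching_semiBisim : IsSemiBranching step τ e (SemiBisim step τ e) := by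
  rintro x y ⟨r, hsymm, hr, hxy⟩
  exact ((hr.mono fun a b hab => ⟨r, hsymm, hr, hab⟩) x y hxy)

theorem SemiBisim.tauStar_of_tauStar (h : SemiBisim step τ e x y)
    (hx : ReflTransGen (step τ) x e) : ReflTransGen (step τ) y e :=
  (isSemiBranching_semiBisim x y h).1 hx

theorem SemiBisim.canMatch (h : SemiBisim step τ e x y) (hx : step ℓ x x') :
    CanMatch step τ (SemiBisim step τ e) y x ℓ x' :=
  (isSemiBranching_semiBisim x y h).2 ℓ x' hx

/-- The stuttering property: a silent path between bisimilar states stays in their class. -/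
theorem SemiBisim.of_tauStar_of_tauStar {x₀ xₙ : Q} (h : SemiBisim step τ e x₀ xₙ)
    (h₀ : ReflTransGen (step τ) x₀ x) (hₙ : ReflTransGen (step τ) x xₙ) :
    SemiBisim step τ e x₀ x := by
  let E : Q → Q → Prop := fun a b =>
    (ReflTransGen (step τ) x₀ a ∧ ReflTransGen (step τ) a xₙ) ∧ SemiBisim step τ e x₀ b
  have hE : Progresses step τ e E (SemiBisim step τ e) := by
    rintro a b ⟨⟨ha, -⟩, hb⟩
    obtain ⟨b₁, hb₁, hab₁⟩ := isSemiBranching_semiBisim.exists_tauStar hb ha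
    exact ⟨fun hae => hb.tauStar_of_tauStar (ha.trans hae),
      fun ℓ a' ha' => (hab₁.canMatch ha').head hb₁⟩
  have hE' : Progresses step τ e (flip E) (SemiBisim step τ e) := by
    rintro a b ⟨⟨-, hb⟩, ha⟩
    have haxₙ := ha.symm.trans h
    exact ⟨fun hae => hb.trans (haxₙ.tauStar_of_tauStar hae),
      fun ℓ a' ha' => (haxₙ.canMatch ha').head hb⟩
  have hD : IsSemiBranching step τ e (SemiBisim step τ e ⊔ E ⊔ flip E) :=
    ((isSemiBranching_semiBisim.sup hE).sup hE').mono (le_sup_left.trans le_sup_left)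
  refine (SemiBisim.of_isSemiBranching ?_ hD (Or.inl (Or.inr ⟨⟨h₀, hₙ⟩, .refl x₀⟩))).symm
  rintro a b ((hab | hab) | hab)
  exacts [Or.inl (Or.inl hab.symm), Or.inr hab, Or.inl (Or.inr hab)]

theorem SemiBisim.relChain {x₀ xₙ : Q} (h : SemiBisim step τ e x₀ xₙ)
    (hc : ReflTransGen (step τ) x₀ xₙ) :
    ReflTransGen (fun a b => step τ a b ∧ SemiBisim step τ e x₀ b) x₀ xₙ := by
  suffices ∀ x, ReflTransGen (step τ) x₀ x → ReflTransGen (step τ) x xₙ →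
      ReflTransGen (fun a b => step τ a b ∧ SemiBisim step τ e x₀ b) x xₙ from
    this x₀ .refl hc
  intro x h₀ hₙ
  induction hₙ using ReflTransGen.head_induction_on with
  | refl => exact .refl
  | head hs hrest ih =>
    exact .head ⟨hs, h.of_tauStar_of_tauStar (h₀.tail hs) hrest⟩ (ih (h₀.tail hs))

end SemiBranching

namespace BPA

variable {C A : Type} {Γ : BPA C A} {R S : Set C} {ℓ : A} {X : C}
  {p q u v w x x' z z' γ δ : List C}

theorem exists_eq_nf_append (R : Set C) (v : List C) :
    ∃ c, v = nf R v ++ c ∧ ∀ X ∈ c, X ∈ R := by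
  classical
  refine ⟨(v.reverse.takeWhile fun X => decide (X ∈ R)).reverse, ?_, fun X hX => ?_⟩
  · rw [nf, ← List.reverse_append, List.takeWhile_append_dropWhile, List.reverse_reverse]
  · simpa using List.mem_takeWhile_imp (List.mem_reverse.mp hX)

theorem nf_append_of_forall_mem (h : ∀ X ∈ v, X ∈ R) (u : List C) :
    nf R (u ++ v) = nf R u := by
  classical
  have : v.reverse.dropWhile (fun X => decide (X ∈ R)) = [] :=
    List.dropWhile_eq_nil_iff.mpr fun X hX => by simpa using h X (List.mem_reverse.mp hX)
  simp [nf, List.dropWhile_append, this]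

theorem nf_eq_nil_iff : nf R v = [] ↔ ∀ X ∈ v, X ∈ R := by
  classical
  simp [nf, List.dropWhile_eq_nil_iff]

theorem nf_append_singleton (hX : X ∉ R) (u : List C) : nf R (u ++ [X]) = u ++ [X] := by
  classical
  simp [nf, hX]

theorem nf_nf_of_subset (hRS : R ⊆ S) (v : List C) : nf S (nf R v) = nf S v := by
  obtain ⟨c, hv, hc⟩ := exists_eq_nf_append R v
  conv_rhs => rw [hv, nf_append_of_forall_mem fun X hX => hRS (hc X hX)]

theorem nf_eq_nf_of_subset (hRS : R ⊆ S) {a b : List C} (h : nf R a = nf R b) :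
    nf S a = nf S b := by
  rw [← nf_nf_of_subset hRS a, h, nf_nf_of_subset hRS]

theorem nf_nf (R : Set C) (v : List C) : nf R (nf R v) = nf R v :=
  nf_nf_of_subset subset_rfl v

theorem REq_iff_nf_eq {α β : List C} : REq R α β ↔ nf R α = nf R β := by
  refine ⟨?_, fun h => ?_⟩
  · rintro ⟨ζ, a, b, rfl, rfl, ha, hb⟩
    rw [nf_append_of_forall_mem ha, nf_append_of_forall_mem hb]
  · obtain ⟨c, hα, hc⟩ := exists_eq_nf_append R α
    obtain ⟨d, hβ, hd⟩ := exists_eq_nf_append R β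
    exact ⟨nf R α, c, d, hα, h ▸ hβ, hc, hd⟩

theorem Step.append_right (h : Γ.Step ℓ p q) (w : List C) :
    Γ.Step ℓ (p ++ w) (q ++ w) := by
  obtain ⟨X, γ, β, hr, rfl, rfl⟩ := h
  exact ⟨X, γ, β ++ w, hr, rfl, by simp⟩

theorem Step.exists_of_append (h : Γ.Step ℓ (u ++ v) p) (hu : u ≠ []) :
    ∃ u', Γ.Step ℓ u u' ∧ p = u' ++ v := by
  obtain ⟨X, g, β, hr, huv, rfl⟩ := h
  obtain ⟨Y, t, rfl⟩ := List.exists_cons_of_ne_nil hu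
  obtain ⟨rfl, rfl⟩ := List.cons_eq_cons.mp huv
  exact ⟨g ++ t, ⟨_, g, t, hr, rfl, rfl⟩, (List.append_assoc g t v).symm⟩

theorem TauStar.append_right (h : Γ.TauStar p q) (w : List C) :
    Γ.TauStar (p ++ w) (q ++ w) :=
  ReflTransGen.lift (· ++ w) (fun _ _ h => h.append_right w) _ _ h

theorem tauStar_nil_of_forall_mem (hRG : R ⊆ Γ.GroundC) (h : ∀ X ∈ p, X ∈ R) :
    Γ.TauStar p [] := by
  induction p with
  | nil => exact .refl
  | cons X t ih =>
    have hX : Γ.TauStar ([X] ++ t) t := by simpa using (hRG (h X (by simp))).append_right t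
    exact hX.trans (ih fun Y hY => h Y (by simp [hY]))

theorem TauStar.nil_of_append (h : Γ.TauStar (u ++ v) []) : Γ.TauStar u [] := by
  generalize hw : u ++ v = w at h
  induction h using ReflTransGen.head_induction_on generalizing u with
  | refl => exact (List.append_eq_nil_iff.mp hw).1 ▸ .refl
  | head hs _ ih =>
    obtain ⟨X, g, β, hr, hX, rfl⟩ := hs
    rcases u with _ | ⟨Y, t⟩
    · exact .refl
    · obtain ⟨rfl, rfl⟩ := List.cons_eq_cons.mp (hw.trans hX)
      exact .head ⟨_, g, t, hr, rfl, rfl⟩ (ih (List.append_assoc g t v))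

theorem stepR_nf_of_step (h : Γ.Step ℓ p q) : Γ.StepR R ℓ (nf R p) (nf R q) :=
  ⟨p, q, rfl, rfl, h⟩

theorem tauStarR_nf_of_tauStar (h : Γ.TauStar p q) : Γ.TauStarR R (nf R p) (nf R q) :=
  ReflTransGen.lift (nf R) (fun _ _ h => stepR_nf_of_step h) _ _ h

theorem StepR.nf_eq (h : Γ.StepR R ℓ z z') : nf R z' = z' := by
  obtain ⟨p, q, -, rfl, -⟩ := h
  exact nf_nf R q

theorem TauStarR.nf_eq (h : Γ.TauStarR R z z') (hz : nf R z = z) : nf R z' = z' := by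
  induction h with
  | refl => exact hz
  | tail _ hs _ => exact hs.nf_eq

theorem StepR.nf_of_subset (hRS : R ⊆ S) (h : Γ.StepR R ℓ z z') :
    Γ.StepR S ℓ (nf S z) (nf S z') := by
  obtain ⟨p, q, rfl, rfl, hs⟩ := h
  rw [nf_nf_of_subset hRS, nf_nf_of_subset hRS]
  exact stepR_nf_of_step hs

theorem TauStarR.nf_of_subset (hRS : R ⊆ S) (h : Γ.TauStarR R z z') :
    Γ.TauStarR S (nf S z) (nf S z') :=
  ReflTransGen.lift (nf S) (fun _ _ h => h.nf_of_subset hRS) _ _ h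

/-- A normal-form step from a nonempty normal form is performed by the head constant, so every
process with that normal form can take it. -/
theorem StepR.exists_step (h : Γ.StepR R ℓ z z') (hp : nf R p = z) (hz : z ≠ []) :
    ∃ p', Γ.Step ℓ p p' ∧ nf R p' = z' := by
  obtain ⟨γ, δ, rfl, rfl, X, g, β, hr, rfl, rfl⟩ := h
  obtain ⟨Y, t, hYt⟩ := List.exists_cons_of_ne_nil hz
  obtain ⟨c, hγ, hc⟩ := exists_eq_nf_append R (X :: β)
  obtain ⟨d, hp', hd⟩ := exists_eq_nf_append R p
  rw [hYt, List.cons_append, List.cons_eq_cons] at hγ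
  obtain ⟨rfl, rfl⟩ := hγ
  refine ⟨g ++ (t ++ d), ⟨X, g, t ++ d, hr, by rw [hp', hp, hYt, List.cons_append], rfl⟩, ?_⟩
  rw [← List.append_assoc, ← List.append_assoc, nf_append_of_forall_mem hd,
    nf_append_of_forall_mem hc]

theorem tauStar_nil_of_tauStarR (hRG : R ⊆ Γ.GroundC) (h : Γ.TauStarR R (nf R p) []) :
    Γ.TauStar p [] := by
  generalize hz : nf R p = z at h
  induction h using ReflTransGen.head_induction_on generalizing p with
  | refl => exact tauStar_nil_of_forall_mem hRG (nf_eq_nil_iff.mp hz)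
  | head hs _ ih =>
    by_cases hnil : nf R p = []
    · exact tauStar_nil_of_forall_mem hRG (nf_eq_nil_iff.mp hnil)
    · obtain ⟨p', hp', hnf⟩ := hs.exists_step hz (hz ▸ hnil)
      exact .head hp' (ih hnf)

abbrev SemiBisimR (Γ : BPA C A) (R : Set C) : List C → List C → Prop :=
  SemiBisim (Γ.StepR R) Γ.tau []

theorem RelChain.tauStarR {r : List C → List C → Prop} {anchor : List C}
    (h : RelChain (Γ.StepR R Γ.tau) r anchor z z') : Γ.TauStarR R z z' :=
  ReflTransGen.mono (fun _ _ h => h.1) _ _ h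

theorem RelChain.rel {s r : List C → List C → Prop} {anchor : List C}
    (h : RelChain s r anchor z z') (hz : r anchor z) : r anchor z' := by
  induction h with
  | refl => exact hz
  | tail _ hs _ => exact hs.2

theorem semiBisimR_nf_of_isRBisim (hRG : R ⊆ Γ.GroundC) {r : List C → List C → Prop}
    (hr : Γ.IsRBisim R r) {α β : List C} (hαβ : r α β) :
    Γ.SemiBisimR R (nf R α) (nf R β) := by
  obtain ⟨hequiv, hREq, htransfer⟩ := hr
  let r' : List C → List C → Prop := fun z w => ∃ a b, r a b ∧ z = nf R a ∧ w = nf R b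
  refine .of_isSemiBranching (r := r') ?_ ?_ ⟨α, β, hαβ, rfl, rfl⟩
  · rintro _ _ ⟨a, b, hab, rfl, rfl⟩
    exact ⟨b, a, hequiv.symm hab, rfl, rfl⟩
  rintro _ _ ⟨a, b, hab, rfl, rfl⟩
  refine ⟨fun ha => tauStarR_nf_of_tauStar ((htransfer a b hab).1
    (tauStar_nil_of_tauStarR hRG ha)), ?_⟩
  rintro ℓ _ ⟨γ, δ, hγ, rfl, hγδ⟩
  have hγb : r γ b := hequiv.trans (hREq _ _ (REq_iff_nf_eq.mpr hγ.symm)) hab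
  have answer : ∀ β'' β', RelChain (Γ.StepR R Γ.tau) r b (nf R b) β'' →
      Γ.StepR R ℓ β'' β' → r δ β' → CanMatch (Γ.StepR R) Γ.tau r' (nf R b) (nf R a) ℓ (nf R δ) :=
    fun β'' β' hchain hstep hδβ' =>
      ⟨β'', hchain.tauStarR,
        ⟨a, β'', hequiv.trans hab (hchain.rel (hREq _ _ (REq_iff_nf_eq.mpr (nf_nf R b).symm))),
          rfl, (TauStarR.nf_eq hchain.tauStarR (nf_nf R b)).symm⟩,
        Or.inr ⟨β', hstep, δ, β', hδβ', rfl, hstep.nf_eq.symm⟩⟩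
  by_cases hℓ : ℓ = Γ.tau
  · subst hℓ
    by_cases hstay : r γ δ
    · exact ⟨nf R b, .refl, ⟨a, b, hab, rfl, rfl⟩,
        Or.inl ⟨rfl, δ, b, hequiv.trans (hequiv.symm hstay) hγb, rfl, rfl⟩⟩
    · obtain ⟨β'', β', hchain, hstep, -, hδβ'⟩ := (htransfer γ b hγb).2.1 δ hγδ hstay
      exact answer β'' β' hchain hstep hδβ'
  · obtain ⟨β'', β', hchain, hstep, hδβ'⟩ := (htransfer γ b hγb).2.2 ℓ hℓ δ hγδ
    exact answer β'' β' hchain hstep hδβ'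

theorem relChain_of_semiBisimR {β η : List C} (h : Γ.SemiBisimR R (nf R β) η)
    (hc : Γ.TauStarR R (nf R β) η) :
    RelChain (Γ.StepR R Γ.tau) (fun p q => Γ.SemiBisimR R (nf R p) (nf R q)) β (nf R β) η := by
  refine ReflTransGen.mono (fun _ b ⟨hs, hb⟩ => ⟨hs, ?_⟩) _ _ (h.relChain hc)
  beta_reduce
  rwa [hs.nf_eq]

theorem isRBisim_semiBisimR (hRG : R ⊆ Γ.GroundC) :
    Γ.IsRBisim R fun α β => Γ.SemiBisimR R (nf R α) (nf R β) := by
  refine ⟨⟨fun _ => .refl _, .symm, .trans⟩,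
    fun α β h => by beta_reduce; rw [REq_iff_nf_eq.mp h]; exact .refl _,
    fun α β (h : Γ.SemiBisimR R (nf R α) (nf R β)) => ⟨fun hα => tauStar_nil_of_tauStarR hRG
      (h.tauStar_of_tauStar (tauStarR_nf_of_tauStar hα)), ?_, ?_⟩⟩
  · intro α' hstep (hne : ¬ Γ.SemiBisimR R (nf R α) (nf R α'))
    beta_reduce
    obtain ⟨η₁, hc, hαη₁, ⟨-, hstay⟩ | ⟨η₂, hs, hα'η₂⟩⟩ := h.canMatch (stepR_nf_of_step hstep)
    · exact absurd (hαη₁.trans hstay.symm) hne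
    have hη₁ : nf R η₁ = η₁ := TauStarR.nf_eq hc (nf_nf R β)
    refine ⟨η₁, η₂, relChain_of_semiBisimR (h.symm.trans hαη₁) hc, hs, ?_, ?_⟩
    · rw [hη₁, hs.nf_eq]
      exact fun hη => hne (hαη₁.trans (hη.trans hα'η₂.symm))
    · rwa [hs.nf_eq]
  · intro ℓ _ α' hstep
    beta_reduce
    obtain ⟨η₁, hc, hαη₁, ⟨rfl, -⟩ | ⟨η₂, hs, hα'η₂⟩⟩ := h.canMatch (stepR_nf_of_step hstep)
    · contradiction
    exact ⟨η₁, η₂, relChain_of_semiBisimR (h.symm.trans hαη₁) hc, hs, by rwa [hs.nf_eq]⟩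

theorem rbisim_iff_semiBisimR (hRG : R ⊆ Γ.GroundC) {α β : List C} :
    Γ.RBisim R α β ↔ Γ.SemiBisimR R (nf R α) (nf R β) :=
  ⟨fun ⟨_, hr, h⟩ => semiBisimR_nf_of_isRBisim hRG hr h, fun h => ⟨_, isRBisim_semiBisimR hRG, h⟩⟩

theorem tauStar_nil_of_semiBisimR (hRG : R ⊆ Γ.GroundC) (h : Γ.SemiBisimR R (nf R p) (nf R q))
    (hp : Γ.TauStar p []) : Γ.TauStar q [] :=
  tauStar_nil_of_tauStarR hRG (h.tauStar_of_tauStar (tauStarR_nf_of_tauStar hp))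

theorem semiBisimR_nf_of_subset (hRS : R ⊆ S) (hSG : S ⊆ Γ.GroundC)
    (h : Γ.SemiBisimR R (nf R p) (nf R q)) : Γ.SemiBisimR S (nf S p) (nf S q) := by
  let r : List C → List C → Prop := fun z w =>
    ∃ p q, Γ.SemiBisimR R (nf R p) (nf R q) ∧ z = nf S p ∧ w = nf S q
  refine .of_isSemiBranching (r := r) ?_ ?_ ⟨p, q, h, rfl, rfl⟩
  · rintro _ _ ⟨p, q, hpq, rfl, rfl⟩
    exact ⟨q, p, hpq.symm, rfl, rfl⟩
  rintro _ _ ⟨p, q, hpq, rfl, rfl⟩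
  have hground : Γ.TauStar p [] → Γ.TauStarR S (nf S q) [] := fun hp =>
    tauStarR_nf_of_tauStar (tauStar_nil_of_semiBisimR (hRS.trans hSG) hpq hp)
  refine ⟨fun hp => hground (tauStar_nil_of_tauStarR hSG hp), fun ℓ z' hs => ?_⟩
  by_cases hnil : nf S p = []
  · exact ⟨[], hground (tauStar_nil_of_forall_mem hSG (nf_eq_nil_iff.mp hnil)),
      ⟨[], [], .refl _, hnil, rfl⟩,
      Or.inr ⟨z', hnil ▸ hs, z', z', .refl _, hs.nf_eq.symm, hs.nf_eq.symm⟩⟩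
  obtain ⟨p', hp', hnf⟩ := hs.exists_step rfl hnil
  obtain ⟨κ₁, hc, h₁, hmove⟩ := hpq.canMatch (stepR_nf_of_step (R := R) hp')
  have hκ₁ : nf R κ₁ = κ₁ := TauStarR.nf_eq hc (nf_nf R q)
  have hcS : Γ.TauStarR S (nf S q) (nf S κ₁) := by
    simpa only [nf_nf_of_subset hRS] using TauStarR.nf_of_subset hRS hc
  refine ⟨nf S κ₁, hcS, ⟨p, κ₁, hκ₁.symm ▸ h₁, rfl, rfl⟩, ?_⟩
  rcases hmove with ⟨rfl, h₁'⟩ | ⟨κ₂, hs₂, h₂⟩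
  · exact Or.inl ⟨rfl, p', κ₁, hκ₁.symm ▸ h₁', hnf.symm, rfl⟩
  · exact Or.inr ⟨nf S κ₂, hs₂.nf_of_subset hRS, p', κ₂, hs₂.nf_eq.symm ▸ h₂, hnf.symm, rfl⟩

theorem RBisim.of_subset (hRS : R ⊆ S) (hSG : S ⊆ Γ.GroundC) {α β : List C}
    (h : Γ.RBisim R α β) : Γ.RBisim S α β :=
  (rbisim_iff_semiBisimR hSG).mpr <|
    semiBisimR_nf_of_subset hRS hSG ((rbisim_iff_semiBisimR (hRS.trans hSG)).mp h)

theorem IdR_subset_IdR (hRS : R ⊆ S) (hSG : S ⊆ Γ.GroundC) : Γ.IdR R ⊆ Γ.IdR S :=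
  fun _ => RBisim.of_subset hRS hSG

theorem IdR_subset_groundC (hRG : R ⊆ Γ.GroundC) : Γ.IdR R ⊆ Γ.GroundC :=
  fun _ hX => tauStar_nil_of_semiBisimR hRG ((rbisim_iff_semiBisimR hRG).mp hX).symm .refl

theorem subset_IdR (hRG : R ⊆ Γ.GroundC) : R ⊆ Γ.IdR R := fun X hX =>
  ⟨_, isRBisim_semiBisimR hRG,
    (isRBisim_semiBisimR hRG).2.1 _ _ ⟨[], [X], [], rfl, rfl, by simpa using hX, by simp⟩⟩

theorem semiBisimR_nf_append_singleton (hRG : R ⊆ Γ.GroundC) (hX : X ∈ Γ.IdR R)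
    (u : List C) : Γ.SemiBisimR R (nf R (u ++ [X])) (nf R u) := by
  by_cases hXR : X ∈ R
  · rw [nf_append_of_forall_mem (by simpa using hXR)]
    exact .refl _
  have hXnf : nf R [X] = [X] := nf_append_singleton hXR []
  have hX' : Γ.SemiBisimR R [X] [] := hXnf ▸ (rbisim_iff_semiBisimR hRG).mp hX
  have hXε : Γ.TauStarR R [X] [] := hX'.symm.tauStar_of_tauStar .refl
  have hpre : ∀ u, Γ.TauStar u [] → Γ.TauStarR R (u ++ [X]) [X] := fun u hu => by
    have := tauStarR_nf_of_tauStar (R := R) (hu.append_right [X])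
    rwa [nf_append_singleton hXR, List.nil_append, hXnf] at this
  let E : List C → List C → Prop := fun z w => ∃ u, z = u ++ [X] ∧ w = nf R u
  let D := Γ.SemiBisimR R ⊔ E ⊔ flip E
  have hE : Progresses (Γ.StepR R) Γ.tau [] E D := by
    rintro _ _ ⟨u, rfl, rfl⟩
    refine ⟨fun hu => tauStarR_nf_of_tauStar (tauStar_nil_of_tauStarR hRG
      (p := u ++ [X]) (by rwa [nf_append_singleton hXR])).nil_of_append, fun ℓ z' hs => ?_⟩
    rcases eq_or_ne u [] with rfl | hu
    · exact (hX'.canMatch hs).mono (le_sup_left.trans le_sup_left)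
    obtain ⟨p', hp', rfl⟩ := hs.exists_step (nf_append_singleton hXR u) (by simp)
    obtain ⟨u', hu', rfl⟩ := hp'.exists_of_append hu
    exact ⟨nf R u, .refl, Or.inl (Or.inr ⟨u, rfl, rfl⟩),
      Or.inr ⟨nf R u', stepR_nf_of_step hu', Or.inl (Or.inr ⟨u', nf_append_singleton hXR u', rfl⟩)⟩⟩
  have hE' : Progresses (Γ.StepR R) Γ.tau [] (flip E) D := by
    rintro _ _ ⟨u, rfl, rfl⟩
    refine ⟨fun hu => (hpre u (tauStar_nil_of_tauStarR hRG hu)).trans hXε, fun ℓ z' hs => ?_⟩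
    by_cases hnil : nf R u = []
    · rw [hnil] at hs ⊢
      exact (((hX'.symm.canMatch hs).mono (le_sup_left.trans le_sup_left)).head
        (hpre u (tauStar_nil_of_forall_mem hRG (nf_eq_nil_iff.mp hnil))))
    obtain ⟨u', hu', rfl⟩ := hs.exists_step rfl hnil
    have hstep := stepR_nf_of_step (R := R) (hu'.append_right [X])
    rw [nf_append_singleton hXR, nf_append_singleton hXR] at hstep
    exact ⟨u ++ [X], .refl, Or.inr ⟨u, rfl, rfl⟩, Or.inr ⟨u' ++ [X], hstep, Or.inr ⟨u', rfl, rfl⟩⟩⟩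
  have hD : IsSemiBranching (Γ.StepR R) Γ.tau [] D :=
    ((isSemiBranching_semiBisim.mono (le_sup_left.trans le_sup_left)).sup hE).sup hE'
  refine .of_isSemiBranching ?_ hD (Or.inl (Or.inr ⟨u, nf_append_singleton hXR u, rfl⟩))
  rintro a b ((hab | hab) | hab)
  exacts [Or.inl (Or.inl hab.symm), Or.inr hab, Or.inl (Or.inr hab)]

theorem semiBisimR_nf_append (hRG : R ⊆ Γ.GroundC) {s : List C} (hs : ∀ X ∈ s, X ∈ Γ.IdR R)
    (u : List C) : Γ.SemiBisimR R (nf R (u ++ s)) (nf R u) := by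
  induction s using List.reverseRecOn with
  | nil => simpa using .refl _
  | append_singleton s X ih =>
    rw [← List.append_assoc]
    exact (semiBisimR_nf_append_singleton hRG (hs X (by simp)) _).trans
      (ih fun Y hY => hs Y (by simp [hY]))

theorem semiBisimR_nf_nf (hRG : R ⊆ Γ.GroundC) (hSId : S ⊆ Γ.IdR R) (v : List C) :
    Γ.SemiBisimR R (nf R v) (nf R (nf S v)) := by
  obtain ⟨c, hv, hc⟩ := exists_eq_nf_append S v
  conv_lhs => rw [hv]
  exact semiBisimR_nf_append hRG (fun X hX => hSId (hc X hX)) _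

theorem SemiBisimR.canMatch_stepR_of_subset_IdR (hRG : R ⊆ Γ.GroundC) (hSId : S ⊆ Γ.IdR R)
    (h : Γ.SemiBisimR R (nf R x) w) (hs : Γ.StepR S ℓ x x') :
    CanMatch (Γ.StepR R) Γ.tau (fun a b => Γ.SemiBisimR R (nf R a) b) w x ℓ x' := by
  obtain ⟨γ, δ, rfl, rfl, hstep⟩ := hs
  have hγ := semiBisimR_nf_nf hRG hSId γ
  exact ((hγ.trans h).canMatch (stepR_nf_of_step hstep)).imp (fun _ hb => hγ.symm.trans hb)
    (fun _ hb => (semiBisimR_nf_nf hRG hSId δ).symm.trans hb)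

theorem SemiBisimR.exists_tauStarR_of_subset_IdR (hRG : R ⊆ Γ.GroundC) (hSId : S ⊆ Γ.IdR R)
    (h : Γ.SemiBisimR R (nf R x) w) (hc : Γ.TauStarR S x x') :
    ∃ w', Γ.TauStarR R w w' ∧ Γ.SemiBisimR R (nf R x') w' := by
  induction hc using ReflTransGen.head_induction_on generalizing w with
  | refl => exact ⟨w, .refl, h⟩
  | head hs _ ih =>
    obtain ⟨w₁, hw₁, h₁⟩ := (h.canMatch_stepR_of_subset_IdR hRG hSId hs).exists_tau
    obtain ⟨w', hw', h'⟩ := ih h₁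
    exact ⟨w', hw₁.trans hw', h'⟩

theorem canMatch_of_semiBisimR_of_subset_IdR (hRG : R ⊆ Γ.GroundC) (hSId : S ⊆ Γ.IdR R)
    (hγq : Γ.SemiBisimR S (nf S γ) (nf S q)) (hqw : Γ.SemiBisimR R (nf R q) w)
    (hstep : Γ.Step ℓ γ δ) :
    CanMatch (Γ.StepR R) Γ.tau
      (fun a b => ∃ q, Γ.SemiBisimR S (nf S a) (nf S q) ∧ Γ.SemiBisimR R (nf R q) b) w γ ℓ δ := by
  obtain ⟨x₁, hx₁, hγx₁, hmove⟩ := hγq.canMatch (stepR_nf_of_step hstep)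
  have hx₁nf : nf S x₁ = x₁ := TauStarR.nf_eq hx₁ (nf_nf S q)
  obtain ⟨w₁, hw₁, hx₁w₁⟩ := SemiBisimR.exists_tauStarR_of_subset_IdR hRG hSId
    ((semiBisimR_nf_nf hRG hSId q).symm.trans hqw) hx₁
  refine CanMatch.head hw₁ ?_
  rcases hmove with ⟨rfl, hδx₁⟩ | ⟨x₂, hx₂, hδx₂⟩
  · exact ⟨w₁, .refl, ⟨x₁, hx₁nf.symm ▸ hγx₁, hx₁w₁⟩, Or.inl ⟨rfl, x₁, hx₁nf.symm ▸ hδx₁, hx₁w₁⟩⟩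
  · exact (hx₁w₁.canMatch_stepR_of_subset_IdR hRG hSId hx₂).imp
      (fun _ hb => ⟨x₁, hx₁nf.symm ▸ hγx₁, hb⟩) (fun _ hb => ⟨x₂, hx₂.nf_eq.symm ▸ hδx₂, hb⟩)

theorem exists_tauStarR_of_semiBisimR_of_subset_IdR (hRS : R ⊆ S) (hRG : R ⊆ Γ.GroundC)
    (hSId : S ⊆ Γ.IdR R) {κ : List C} (hc : Γ.TauStarR R (nf R p) κ)
    (hpq : Γ.SemiBisimR S (nf S p) (nf S q)) (hqw : Γ.SemiBisimR R (nf R q) w) :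
    ∃ p' q' w', nf R p' = κ ∧ Γ.SemiBisimR S (nf S p') (nf S q') ∧
      Γ.SemiBisimR R (nf R q') w' ∧ Γ.TauStarR R w w' := by
  generalize hz : nf R p = z at hc
  induction hc using ReflTransGen.head_induction_on generalizing p q w with
  | refl => exact ⟨p, q, w, hz, hpq, hqw, .refl⟩
  | head hs _ ih =>
    obtain ⟨γ, δ, hγ, rfl, hstep⟩ := hs
    have hγS : nf S γ = nf S p := nf_eq_nf_of_subset hRS (hγ.symm.trans hz.symm)
    obtain ⟨w₁, hw₁, q₁, hδq₁, hq₁w₁⟩ :=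
      (canMatch_of_semiBisimR_of_subset_IdR hRG hSId (hγS ▸ hpq) hqw hstep).exists_tau
    obtain ⟨p', q', w', hp', hp'q', hq'w', hw'⟩ := ih hδq₁ hq₁w₁ rfl
    exact ⟨p', q', w', hp', hp'q', hq'w', hw₁.trans hw'⟩

theorem semiBisimR_nf_of_subset_IdR (hRS : R ⊆ S) (hRG : R ⊆ Γ.GroundC) (hSId : S ⊆ Γ.IdR R)
    {α β : List C} (h : Γ.SemiBisimR S (nf S α) (nf S β)) :
    Γ.SemiBisimR R (nf R α) (nf R β) := by
  let r : List C → List C → Prop := fun z w => ∃ p q, Γ.SemiBisimR R z (nf R p) ∧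
    Γ.SemiBisimR S (nf S p) (nf S q) ∧ Γ.SemiBisimR R (nf R q) w
  refine .of_isSemiBranching (r := r) ?_ ?_ ⟨α, β, .refl _, h, .refl _⟩
  · rintro z w ⟨p, q, hzp, hpq, hqw⟩
    exact ⟨q, p, hqw.symm, hpq.symm, hzp.symm⟩
  rintro z w ⟨p, q, hzp, hpq, hqw⟩
  refine ⟨fun hz => ?_, fun ℓ z' hs => ?_⟩
  · have hp := tauStar_nil_of_tauStarR hRG (hzp.tauStar_of_tauStar hz)
    have hq := tauStar_nil_of_semiBisimR (hSId.trans (IdR_subset_groundC hRG)) hpq hp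
    exact hqw.tauStar_of_tauStar (tauStarR_nf_of_tauStar hq)
  obtain ⟨κ₁, hκ₁, hzκ₁, hmove⟩ := hzp.canMatch hs
  obtain ⟨p₁, q₁, w₁, rfl, hp₁q₁, hq₁w₁, hw₁⟩ :=
    exists_tauStarR_of_semiBisimR_of_subset_IdR hRS hRG hSId hκ₁ hpq hqw
  refine CanMatch.head hw₁ ?_
  rcases hmove with ⟨rfl, hz'κ₁⟩ | ⟨κ₂, hκ₂, hz'κ₂⟩
  · exact ⟨w₁, .refl, ⟨p₁, q₁, hzκ₁, hp₁q₁, hq₁w₁⟩, Or.inl ⟨rfl, p₁, q₁, hz'κ₁, hp₁q₁, hq₁w₁⟩⟩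
  obtain ⟨γ, δ, hγ, rfl, hstep⟩ := hκ₂
  have hγS : nf S γ = nf S p₁ := nf_eq_nf_of_subset hRS hγ.symm
  exact (canMatch_of_semiBisimR_of_subset_IdR hRG hSId (hγS ▸ hp₁q₁) hq₁w₁ hstep).imp
    (fun _ ⟨q', hγq', hq'b⟩ => ⟨γ, q', hγ ▸ hzκ₁, hγq', hq'b⟩)
    (fun _ ⟨q', hδq', hq'b⟩ => ⟨δ, q', hz'κ₂, hδq', hq'b⟩)

theorem IdR_eq_of_subset_IdR (hRS : R ⊆ S) (hRG : R ⊆ Γ.GroundC) (hSId : S ⊆ Γ.IdR R) :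
    Γ.IdR S = Γ.IdR R := by
  have hSG : S ⊆ Γ.GroundC := hSId.trans (IdR_subset_groundC hRG)
  refine subset_antisymm (fun X hX => ?_) (IdR_subset_IdR hRS hSG)
  exact (rbisim_iff_semiBisimR hRG).mpr
    (semiBisimR_nf_of_subset_IdR hRS hRG hSId ((rbisim_iff_semiBisimR hSG).mp hX))

end BPA

theorem IdR_smallest_admissible_general {C A : Type} (Γ : BPA C A)
    (R : Set C) (hR : R ⊆ Γ.GroundC) :
    Γ.Admissible (Γ.IdR R) ∧ R ⊆ Γ.IdR R ∧
      ∀ S : Set C, S ⊆ Γ.GroundC → Γ.Admissible S → R ⊆ S → Γ.IdR R ⊆ S := by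
  have hRId : R ⊆ Γ.IdR R := BPA.subset_IdR hR
  refine ⟨(BPA.IdR_eq_of_subset_IdR hRId hR subset_rfl).symm, hRId, fun S hSG hS hRS => ?_⟩
  exact (BPA.IdR_subset_IdR hRS hSG).trans hS.symm.subset

/-- `Id_R` is admissible, contains `R`, and is the smallest admissible set
containing `R`. -/
theorem IdR_smallest_admissible {C A : Type} (Γ : BPA C A) (hΓ : Γ.Normed)
    (R : Set C) (hR : R ⊆ Γ.GroundC) :
    Γ.Admissible (Γ.IdR R) ∧ R ⊆ Γ.IdR R ∧
      ∀ S : Set C, S ⊆ Γ.GroundC → Γ.Admissible S → R ⊆ S → Γ.IdR R ⊆ S :=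
  IdR_smallest_admissible_general Γ R hR
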